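/- Let Q be a symmetric positive definite d×d real matrix and define V(x) := (xᵀQx)^{m/2}. Then for every δ > 0 there exists a constant κ₂ > 0 such that for every u ∈ 𝒮 and every x ∈ ℝ^d with |x| ≥ 1 and δ|x| < (e·x)⁺ one has ∇V(x)·b(x,u) ≤ κ₂(1 + [(e·x)⁺]^m). -/

import Mathlib

/-!
The expression `∑ i, ∂ᵢV(x) bᵢ(x,u)` is the derivative `DV(x)` applied to the vector `b(x,u)`.
With `q(x) = ⟪x, Qx⟫` we have `DV(x) = (m/2) q(x)^(m/2-1) Dq(x)` and `|Dq(x) v| ≤ 2‖Q‖‖x‖‖v‖`;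
positive definiteness and compactness of the unit sphere give `c‖x‖² ≤ q(x) ≤ ‖Q‖‖x‖²`, whence
`|DV(x) v| ≤ K‖x‖^(m-1)‖v‖`. The drift grows linearly, `‖b(x,u)‖ ≤ B‖x‖` for `‖x‖ ≥ 1`, because
`(e·x)⁺ ≤ d‖x‖` and `‖u‖ ≤ 1` on the simplex. So `∇V·b ≤ KB‖x‖^m`, and on the cone
`δ‖x‖ < (e·x)⁺` this is at most `KBδ^(-m) [(e·x)⁺]^m`.
-/

set_option autoImplicit false

open Matrix Set

noncomputable section

abbrev EucSp (d : ℕ) := EuclideanSpace ℝ (Fin d)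

/-- The probability simplex in `ℝ^d`. -/
def simplex (d : ℕ) : Set (EucSp d) := {u | (∀ i, 0 ≤ u i) ∧ (∑ i, u i) = 1}

/-- First partial derivative `∂f/∂xᵢ`. -/
noncomputable def pd1 {d : ℕ} (f : EucSp d → ℝ) (i : Fin d) (x : EucSp d) : ℝ :=
  fderiv ℝ f x (EuclideanSpace.single i 1)

/-- The piecewise linear drift `b(x,u) = ℓ − R(x − (e·x)⁺u) − (e·x)⁺Γu`. -/
noncomputable def qdrift {d : ℕ} (ℓ : EucSp d) (R Γ : Matrix (Fin d) (Fin d) ℝ)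
    (x u : EucSp d) (i : Fin d) : ℝ :=
  ℓ i - R.mulVec (fun j => x j - max (∑ k, x k) 0 * u j) i
    - max (∑ k, x k) 0 * Γ.mulVec u i

/-- The quadratic form `xᵀQx`. -/
def quadForm {d : ℕ} (Q : Matrix (Fin d) (Fin d) ℝ) (x : EucSp d) : ℝ :=
  ∑ i, ∑ j, x i * (Q i j * x j)

/-- The Lyapunov candidate `V(x) = (xᵀQx)^{m/2}`. -/
noncomputable def Vq {d : ℕ} (Q : Matrix (Fin d) (Fin d) ℝ) (m : ℝ) (x : EucSp d) : ℝ :=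
  quadForm Q x ^ (m / 2)

open scoped RealInnerProductSpace

section
variable {E : Type*} [NormedAddCommGroup E] [NormedSpace ℝ E] [FiniteDimensional ℝ E]

lemma exists_pos_mul_norm_sq_le_of_smul_eq_sq_mul (f : E → ℝ) (hf : Continuous f)
    (hpos : ∀ x ≠ 0, 0 < f x) (hsmul : ∀ (a : ℝ) x, f (a • x) = a ^ 2 * f x) :
    ∃ c > 0, ∀ x, c * ‖x‖ ^ 2 ≤ f x := by
  have hf0 : f 0 = 0 := by simpa using hsmul 0 0
  rcases subsingleton_or_nontrivial E with hE | hE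
  · exact ⟨1, one_pos, fun x => by simp [Subsingleton.elim x 0, hf0]⟩
  obtain ⟨z, hz, hmin⟩ := (isCompact_sphere (0 : E) 1).exists_isMinOn
    (NormedSpace.sphere_nonempty.2 zero_le_one) hf.continuousOn
  have hz0 : z ≠ 0 := ne_zero_of_mem_unit_sphere ⟨z, hz⟩
  refine ⟨f z, hpos z hz0, fun x => ?_⟩
  rcases eq_or_ne x 0 with rfl | hx
  · simp [hf0]
  have hnx : 0 < ‖x‖ := norm_pos_iff.2 hx
  have hunit : ‖x‖⁻¹ • x ∈ Metric.sphere (0 : E) 1 := by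
    simp [norm_smul, hnx.ne']
  have hfz : f z ≤ ‖x‖⁻¹ ^ 2 * f x := hsmul _ x ▸ hmin hunit
  calc f z * ‖x‖ ^ 2 ≤ ‖x‖⁻¹ ^ 2 * f x * ‖x‖ ^ 2 := by gcongr
    _ = f x := by field_simp

end

lemma rpow_le_max_mul_rpow {c C a y : ℝ} (p : ℝ) (hc : 0 < c) (ha : 0 < a)
    (hlo : c * a ≤ y) (hhi : y ≤ C * a) :
    y ^ p ≤ max (c ^ p) (C ^ p) * a ^ p := by
  have hC : 0 ≤ C := by nlinarith
  rcases le_total 0 p with hp | hp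
  · calc y ^ p ≤ (C * a) ^ p :=
          Real.rpow_le_rpow ((by positivity : 0 < c * a).le.trans hlo) hhi hp
      _ = C ^ p * a ^ p := Real.mul_rpow hC ha.le
      _ ≤ max (c ^ p) (C ^ p) * a ^ p := by gcongr; exact le_max_right _ _
  · calc y ^ p ≤ (c * a) ^ p := Real.rpow_le_rpow_of_nonpos (by positivity) hlo hp
      _ = c ^ p * a ^ p := Real.mul_rpow hc.le ha.le
      _ ≤ max (c ^ p) (C ^ p) * a ^ p := by gcongr; exact le_max_left _ _

lemma EuclideanSpace.sum_apply_single_mul {ι : Type*} [Fintype ι] [DecidableEq ι]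
    (L : EuclideanSpace ℝ ι →L[ℝ] ℝ) (v : EuclideanSpace ℝ ι) :
    ∑ i, L (EuclideanSpace.single i 1) * v i = L v := by
  conv_rhs => rw [← (EuclideanSpace.basisFun ι ℝ).sum_repr v]
  simp [mul_comm]

section QuadForm
variable {d : ℕ} (Q : Matrix (Fin d) (Fin d) ℝ)

lemma quadForm_eq_inner (x : EucSp d) : quadForm Q x = ⟪x, toEuclideanCLM (𝕜 := ℝ) Q x⟫ := by
  rw [inner_toEuclideanCLM]
  simp [quadForm, dotProduct, mulVec, Finset.mul_sum]

lemma quadForm_smul (a : ℝ) (x : EucSp d) : quadForm Q (a • x) = a ^ 2 * quadForm Q x := by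
  simp only [quadForm_eq_inner, map_smul, inner_smul_left, inner_smul_right, RCLike.conj_to_real]
  ring

lemma quadForm_le (x : EucSp d) : quadForm Q x ≤ ‖toEuclideanCLM (𝕜 := ℝ) Q‖ * ‖x‖ ^ 2 :=
  calc quadForm Q x ≤ ‖x‖ * ‖toEuclideanCLM (𝕜 := ℝ) Q x‖ := by
        rw [quadForm_eq_inner]; exact real_inner_le_norm _ _
    _ ≤ ‖x‖ * (‖toEuclideanCLM (𝕜 := ℝ) Q‖ * ‖x‖) := by
        gcongr; exact ContinuousLinearMap.le_opNorm _ _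
    _ = ‖toEuclideanCLM (𝕜 := ℝ) Q‖ * ‖x‖ ^ 2 := by ring

lemma Matrix.PosDef.exists_pos_mul_norm_sq_le_quadForm {Q : Matrix (Fin d) (Fin d) ℝ}
    (hQ : Q.PosDef) : ∃ c > 0, ∀ x : EucSp d, c * ‖x‖ ^ 2 ≤ quadForm Q x := by
  refine exists_pos_mul_norm_sq_le_of_smul_eq_sq_mul _ ?_ (fun x hx => ?_) (quadForm_smul Q)
  · exact (continuous_id.inner (toEuclideanCLM (𝕜 := ℝ) Q).continuous).congr
      fun x => (quadForm_eq_inner Q x).symm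
  · rw [quadForm_eq_inner, inner_toEuclideanCLM]
    exact hQ.dotProduct_mulVec_pos (by simpa using hx)

lemma hasFDerivAt_quadForm (x : EucSp d) :
    HasFDerivAt (quadForm Q) (innerSL ℝ (toEuclideanCLM (𝕜 := ℝ) Q x)
      + (innerSL ℝ x).comp (toEuclideanCLM (𝕜 := ℝ) Q)) x := by
  have h := (hasFDerivAt_id x).inner ℝ (toEuclideanCLM (𝕜 := ℝ) Q).hasFDerivAt
  refine (h.congr_fderiv ?_).congr_of_eventuallyEq (.of_forall (quadForm_eq_inner Q))
  ext v
  simp [add_comm, real_inner_comm]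

end QuadForm

section Lyapunov
variable {d : ℕ} {Q : Matrix (Fin d) (Fin d) ℝ}

lemma hasFDerivAt_Vq (m : ℝ) {x : EucSp d} (hx : quadForm Q x ≠ 0) :
    HasFDerivAt (Vq Q m) ((m / 2 * quadForm Q x ^ (m / 2 - 1)) •
      (innerSL ℝ (toEuclideanCLM (𝕜 := ℝ) Q x)
        + (innerSL ℝ x).comp (toEuclideanCLM (𝕜 := ℝ) Q))) x :=
  (hasFDerivAt_quadForm Q x).rpow_const (.inl hx)

lemma Matrix.PosDef.exists_abs_fderiv_Vq_apply_le (hQ : Q.PosDef) (m : ℝ) :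
    ∃ K ≥ 0, ∀ x ≠ 0, ∀ v : EucSp d,
      |fderiv ℝ (Vq Q m) x v| ≤ K * ‖x‖ ^ (m - 1) * ‖v‖ := by
  obtain ⟨c, hc, hlow⟩ := hQ.exists_pos_mul_norm_sq_le_quadForm
  set A := toEuclideanCLM (𝕜 := ℝ) Q
  set p := m / 2 - 1 with hp
  set K := max (c ^ p) (‖A‖ ^ p)
  refine ⟨|m| * K * ‖A‖, by positivity, fun x hx v => ?_⟩
  have hnx : 0 < ‖x‖ := norm_pos_iff.2 hx
  have hq : 0 < quadForm Q x := (by positivity : 0 < c * ‖x‖ ^ 2).trans_le (hlow x)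
  have hqp : quadForm Q x ^ p ≤ K * (‖x‖ ^ 2) ^ p :=
    rpow_le_max_mul_rpow p hc (by positivity) (hlow x) (quadForm_le Q x)
  have hDq : |⟪A x, v⟫ + ⟪x, A v⟫| ≤ 2 * ‖A‖ * ‖x‖ * ‖v‖ :=
    calc |⟪A x, v⟫ + ⟪x, A v⟫| ≤ ‖A x‖ * ‖v‖ + ‖x‖ * ‖A v‖ :=
          (abs_add_le _ _).trans (add_le_add (abs_real_inner_le_norm _ _)
            (abs_real_inner_le_norm _ _))
      _ ≤ ‖A‖ * ‖x‖ * ‖v‖ + ‖x‖ * (‖A‖ * ‖v‖) := by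
          gcongr <;> exact ContinuousLinearMap.le_opNorm _ _
      _ = 2 * ‖A‖ * ‖x‖ * ‖v‖ := by ring
  have hpow : (‖x‖ ^ 2) ^ p * ‖x‖ = ‖x‖ ^ (m - 1) := by
    rw [← Real.rpow_natCast, ← Real.rpow_mul hnx.le, ← Real.rpow_add_one hnx.ne']
    congr 1
    rw [hp]
    ring
  rw [(hasFDerivAt_Vq m hq.ne').fderiv]
  calc |((m / 2 * quadForm Q x ^ p) • (innerSL ℝ (A x) + (innerSL ℝ x).comp A)) v|
      = |m| / 2 * quadForm Q x ^ p * |⟪A x, v⟫ + ⟪x, A v⟫| := by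
        simp only [_root_.smul_apply, _root_.add_apply, ContinuousLinearMap.comp_apply,
          innerSL_apply_apply, smul_eq_mul, abs_mul, abs_div, abs_two,
          abs_of_pos (Real.rpow_pos_of_pos hq p)]
    _ ≤ |m| / 2 * (K * (‖x‖ ^ 2) ^ p) * (2 * ‖A‖ * ‖x‖ * ‖v‖) := by gcongr
    _ = |m| * K * ‖A‖ * ((‖x‖ ^ 2) ^ p * ‖x‖) * ‖v‖ := by ring
    _ = |m| * K * ‖A‖ * ‖x‖ ^ (m - 1) * ‖v‖ := by rw [hpow]

end Lyapunov

section Drift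
variable {d : ℕ}

lemma norm_le_one_of_mem_simplex {u : EucSp d} (hu : u ∈ simplex d) : ‖u‖ ≤ 1 := by
  obtain ⟨hu0, hu1⟩ := hu
  have hle : ∀ i, u i ≤ 1 := fun i =>
    hu1 ▸ Finset.single_le_sum (fun j _ => hu0 j) (Finset.mem_univ i)
  rw [EuclideanSpace.norm_eq, Real.sqrt_le_one]
  calc ∑ i, ‖u i‖ ^ 2 ≤ ∑ i, u i := Finset.sum_le_sum fun i _ => by
        rw [Real.norm_eq_abs, sq_abs]; nlinarith [hu0 i, hle i]
    _ = 1 := hu1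

lemma sum_apply_le_card_mul_norm (x : EucSp d) : ∑ i, x i ≤ d * ‖x‖ :=
  calc ∑ i, x i ≤ ∑ _i : Fin d, ‖x‖ :=
        Finset.sum_le_sum fun i _ => (le_abs_self _).trans (PiLp.norm_apply_le x i)
    _ = d * ‖x‖ := by simp

lemma toLp_qdrift (ℓ : EucSp d) (R Γ : Matrix (Fin d) (Fin d) ℝ) (x u : EucSp d) :
    WithLp.toLp 2 (qdrift ℓ R Γ x u) = ℓ - toEuclideanCLM (𝕜 := ℝ) R (x - max (∑ k, x k) 0 • u)
      - toEuclideanCLM (𝕜 := ℝ) Γ (max (∑ k, x k) 0 • u) := by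
  ext i
  simp only [qdrift, PiLp.sub_apply, ofLp_toEuclideanCLM, WithLp.ofLp_smul, mulVec_smul,
    WithLp.ofLp_sub]
  rfl

lemma norm_toLp_qdrift_le (ℓ : EucSp d) (R Γ : Matrix (Fin d) (Fin d) ℝ) {u x : EucSp d}
    (hu : u ∈ simplex d) (hx : 1 ≤ ‖x‖) :
    ‖WithLp.toLp 2 (qdrift ℓ R Γ x u)‖ ≤ (‖ℓ‖ + (1 + d) * ‖toEuclideanCLM (𝕜 := ℝ) R‖
      + d * ‖toEuclideanCLM (𝕜 := ℝ) Γ‖) * ‖x‖ := by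
  set s := max (∑ k, x k) 0
  set R' := toEuclideanCLM (𝕜 := ℝ) R
  set Γ' := toEuclideanCLM (𝕜 := ℝ) Γ
  have hs0 : 0 ≤ s := le_max_right _ _
  have hsu : ‖s • u‖ ≤ d * ‖x‖ := by
    rw [norm_smul, Real.norm_of_nonneg hs0]
    exact (mul_le_of_le_one_right hs0 (norm_le_one_of_mem_simplex hu)).trans
      (max_le (sum_apply_le_card_mul_norm x) (by positivity))
  rw [toLp_qdrift]
  calc ‖ℓ - R' (x - s • u) - Γ' (s • u)‖ ≤ ‖ℓ‖ + ‖R'‖ * (‖x‖ + ‖s • u‖) + ‖Γ'‖ * ‖s • u‖ := by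
        refine (norm_sub_le _ _).trans
          (add_le_add ((norm_sub_le _ _).trans (add_le_add le_rfl ?_)) (Γ'.le_opNorm _))
        exact (R'.le_opNorm _).trans (by gcongr; exact norm_sub_le _ _)
    _ ≤ ‖ℓ‖ * ‖x‖ + ‖R'‖ * (‖x‖ + d * ‖x‖) + ‖Γ'‖ * (d * ‖x‖) := by
        gcongr
        exact le_mul_of_one_le_right (norm_nonneg _) hx
    _ = (‖ℓ‖ + (1 + d) * ‖R'‖ + d * ‖Γ'‖) * ‖x‖ := by ring

end Drift

theorem stmt2_general (d : ℕ) (m : ℝ) (hm : 1 ≤ m)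
    (ℓ : EucSp d) (R Γ Q : Matrix (Fin d) (Fin d) ℝ)
    (hQpos : Q.PosDef) :
    ∀ δ : ℝ, 0 < δ → ∃ κ₂ : ℝ, 0 < κ₂ ∧
      ∀ (u x : EucSp d), u ∈ simplex d → 1 ≤ ‖x‖ →
        δ * ‖x‖ < max (∑ i, x i) 0 →
        ∑ i, pd1 (Vq Q m) i x * qdrift ℓ R Γ x u i ≤
          κ₂ * (1 + (max (∑ i, x i) 0) ^ m) := by
  intro δ hδ
  obtain ⟨K, hK0, hK⟩ := hQpos.exists_abs_fderiv_Vq_apply_le m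
  set B := ‖ℓ‖ + (1 + d) * ‖toEuclideanCLM (𝕜 := ℝ) R‖ + d * ‖toEuclideanCLM (𝕜 := ℝ) Γ‖
  refine ⟨K * B / δ ^ m + 1, by positivity, fun u x hu hx hδx => ?_⟩
  set s := max (∑ i, x i) 0
  have hnx : 0 < ‖x‖ := one_pos.trans_le hx
  have hxs : ‖x‖ ^ m ≤ s ^ m / δ ^ m := by
    rw [← Real.div_rpow (le_max_right _ _) hδ.le]
    exact Real.rpow_le_rpow hnx.le ((le_div_iff₀ hδ).2 (by linarith)) (by linarith)
  calc ∑ i, pd1 (Vq Q m) i x * qdrift ℓ R Γ x u i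
      = fderiv ℝ (Vq Q m) x (WithLp.toLp 2 (qdrift ℓ R Γ x u)) :=
        EuclideanSpace.sum_apply_single_mul _ (WithLp.toLp 2 (qdrift ℓ R Γ x u))
    _ ≤ K * ‖x‖ ^ (m - 1) * (B * ‖x‖) :=
        (le_abs_self _).trans ((hK x (norm_pos_iff.1 hnx) _).trans
          (by gcongr; exact norm_toLp_qdrift_le ℓ R Γ hu hx))
    _ = K * B * (‖x‖ ^ (m - 1) * ‖x‖) := by ring
    _ = K * B * ‖x‖ ^ m := by rw [← Real.rpow_add_one hnx.ne', sub_add_cancel]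
    _ ≤ K * B * (s ^ m / δ ^ m) := by gcongr
    _ = K * B / δ ^ m * s ^ m := by ring
    _ ≤ (K * B / δ ^ m + 1) * (1 + s ^ m) := by
        have : 0 ≤ s ^ m := Real.rpow_nonneg (le_max_right _ _) m
        have : 0 ≤ K * B / δ ^ m := by positivity
        nlinarith

theorem stmt2 (d : ℕ) (hd : 1 ≤ d) (m : ℝ) (hm : 1 ≤ m)
    (ℓ : EucSp d) (R Γ Q : Matrix (Fin d) (Fin d) ℝ)
    (hQsymm : Q.IsSymm) (hQpos : Q.PosDef) :
    ∀ δ : ℝ, 0 < δ → ∃ κ₂ : ℝ, 0 < κ₂ ∧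
      ∀ (u x : EucSp d), u ∈ simplex d → 1 ≤ ‖x‖ →
        δ * ‖x‖ < max (∑ i, x i) 0 →
        ∑ i, pd1 (Vq Q m) i x * qdrift ℓ R Γ x u i ≤
          κ₂ * (1 + (max (∑ i, x i) 0) ^ m) :=
  stmt2_general d m hm ℓ R Γ Q hQpos
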